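/- arXiv:1408.5817 — 2 statements merged into one kernel-verified Lean document; each statement's English description precedes it below -/
import Mathlib

section
/- Let q be an element of a commutative ring and write D^{maj}_{n,k}(q) = Σ_{(σ,S)∈𝔖^>_{n,k}} q^{maj((σ,S))}, with the convention D^{maj}_{n,−1}(q) = 0. Then D^{maj}_{n,n−1}(q) = 1 for all n ≥ 1, and for all n ≥ 2 and 0 ≤ k ≤ n−2, D^{maj}_{n,k}(q) = [n−k]_q · D^{maj}_{n−1,k}(q) + [n−k]_q · D^{maj}_{n−1,k−1}(q). -/
open Finset

/-- One-line notation: `oneline σ i` is the value σ_i ∈ {1,…,n} at position i ∈ {1,…,n}. -/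
def oneline {n : ℕ} (σ : Equiv.Perm (Fin n)) (i : ℕ) : ℕ :=
  if h : 1 ≤ i ∧ i ≤ n then (σ ⟨i - 1, by omega⟩ : ℕ) + 1 else 0

/-- The descent set Des(σ) = {i ∈ {1,…,n−1} : σ_i > σ_{i+1}}. -/
def DesSet {n : ℕ} (σ : Equiv.Perm (Fin n)) : Finset ℕ :=
  (Finset.Icc 1 (n - 1)).filter fun i => oneline σ (i + 1) < oneline σ i

/-- The ascent set Asc(σ) = {i ∈ {1,…,n−1} : σ_i < σ_{i+1}}. -/
def AscSet {n : ℕ} (σ : Equiv.Perm (Fin n)) : Finset ℕ :=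
  (Finset.Icc 1 (n - 1)).filter fun i => oneline σ i < oneline σ (i + 1)

/-- maj(σ) = Σ_{i ∈ Des(σ)} i. -/
def majNum {n : ℕ} (σ : Equiv.Perm (Fin n)) : ℕ := ∑ i ∈ DesSet σ, i

/-- des(σ) = |Des(σ)|. -/
def desNum {n : ℕ} (σ : Equiv.Perm (Fin n)) : ℕ := (DesSet σ).card

/-- inv(σ) = #{(i,j) : 1 ≤ i < j ≤ n, σ_i > σ_j}. -/
def invNum {n : ℕ} (σ : Equiv.Perm (Fin n)) : ℕ :=
  ((Finset.Icc 1 n ×ˢ Finset.Icc 1 n).filter fun p =>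
    p.1 < p.2 ∧ oneline σ p.2 < oneline σ p.1).card

/-- coinv(σ) = #{(i,j) : 1 ≤ i < j ≤ n, σ_i < σ_j}. -/
def coinvNum {n : ℕ} (σ : Equiv.Perm (Fin n)) : ℕ :=
  ((Finset.Icc 1 n ×ˢ Finset.Icc 1 n).filter fun p =>
    p.1 < p.2 ∧ oneline σ p.1 < oneline σ p.2).card

/-- inv^{□,j}(σ) = #{i : 1 ≤ i < j, σ_i > σ_j}, inversions ending at position j. -/
def invEnd {n : ℕ} (σ : Equiv.Perm (Fin n)) (j : ℕ) : ℕ :=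
  ((Finset.Icc 1 n).filter fun i => i < j ∧ oneline σ j < oneline σ i).card

/-- inv^{i,□}(σ) = #{j : i < j ≤ n, σ_i > σ_j}, inversions starting at position i. -/
def invStart {n : ℕ} (σ : Equiv.Perm (Fin n)) (i : ℕ) : ℕ :=
  ((Finset.Icc 1 n).filter fun j => i < j ∧ oneline σ j < oneline σ i).card

/-- [m]_q = 1 + q + ⋯ + q^{m−1}. -/
def qnum {R : Type*} [CommRing R] (q : R) (m : ℕ) : R := ∑ i ∈ Finset.range m, q ^ i

/-- [m]_q! = [1]_q [2]_q ⋯ [m]_q, with [0]_q! = 1. -/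
def qfact {R : Type*} [CommRing R] (q : R) (m : ℕ) : R := ∏ i ∈ Finset.range m, qnum q (i + 1)

/-- q-Stirling numbers: S_{0,0}(q)=1, S_{n,k}(q)=0 for k<0 or k>n, and
S_{n+1,k}(q) = S_{n,k−1}(q) + [k]_q S_{n,k}(q). -/
def qStirling {R : Type*} [CommRing R] (q : R) : ℕ → ℕ → R
  | 0, 0 => 1
  | 0, _ + 1 => 0
  | _ + 1, 0 => 0
  | n + 1, k + 1 => qStirling q n k + qnum q (k + 1) * qStirling q n (k + 1)

/-- The set of star-sets of size k inside a given finite set (e.g. the descent set). -/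
def starSets (D : Finset ℕ) (k : ℕ) : Finset (Finset ℕ) :=
  D.powerset.filter fun S => S.card = k

/-- inv((σ,S)) = inv(σ) − Σ_{i∈S} (1 + inv^{□,i}(σ)) for a descent-starred permutation. -/
def starInv {n : ℕ} (σ : Equiv.Perm (Fin n)) (S : Finset ℕ) : ℕ :=
  invNum σ - ∑ i ∈ S, (1 + invEnd σ i)

/-- maj((σ,S)) = maj(σ) − Σ_{i∈S} |Des(σ) ∩ {i,…,n−1}| for a descent-starred permutation. -/
def starMaj {n : ℕ} (σ : Equiv.Perm (Fin n)) (S : Finset ℕ) : ℕ :=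
  majNum σ - ∑ i ∈ S, (DesSet σ ∩ Finset.Icc i (n - 1)).card

/-- Gaussian binomial coefficients: binom_q(m,0)=1, binom_q(m,r)=0 for r>m, and
binom_q(m,r) = binom_q(m−1,r−1) + q^r · binom_q(m−1,r). -/
def qbinom {R : Type*} [CommRing R] (q : R) : ℕ → ℕ → R
  | _, 0 => 1
  | 0, _ + 1 => 0
  | m + 1, r + 1 => qbinom q m r + q ^ (r + 1) * qbinom q m (r + 1)

/-- A_{n,j}(q) = Σ_{σ ∈ 𝔖_n, des(σ)=j} q^{maj(σ)}. -/
def eulerA {R : Type*} [CommRing R] (q : R) (n j : ℕ) : R :=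
  ∑ σ ∈ (Finset.univ : Finset (Equiv.Perm (Fin n))).filter (fun σ => desNum σ = j),
    q ^ majNum σ

/-- [m]_{p,q} = p^{m−1} + p^{m−2} q + ⋯ + p q^{m−2} + q^{m−1}. -/
def pqnum {R : Type*} [CommRing R] (p q : R) (m : ℕ) : R :=
  ∑ i ∈ Finset.range m, p ^ (m - 1 - i) * q ^ i

/-- [m]_{p,q}! = [1]_{p,q} [2]_{p,q} ⋯ [m]_{p,q}. -/
def pqfact {R : Type*} [CommRing R] (p q : R) (m : ℕ) : R :=
  ∏ i ∈ Finset.range m, pqnum p q (i + 1)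

/-- p,q-Stirling numbers: S_{0,0}(p,q)=1, S_{n,k}(p,q)=0 for k<0 or k>n, and
S_{n+1,k}(p,q) = S_{n,k−1}(p,q) + [k]_{p,q} S_{n,k}(p,q). -/
def pqStirling {R : Type*} [CommRing R] (p q : R) : ℕ → ℕ → R
  | 0, 0 => 1
  | 0, _ + 1 => 0
  | _ + 1, 0 => 0
  | n + 1, k + 1 => pqStirling p q n k + pqnum p q (k + 1) * pqStirling p q n (k + 1)

/-- D^{maj}_{n,k}(q) = Σ_{(σ,S)∈𝔖^>_{n,k}} q^{maj((σ,S))}. -/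
def Dmaj {R : Type*} [CommRing R] (q : R) (n k : ℕ) : R :=
  ∑ σ : Equiv.Perm (Fin n), ∑ S ∈ starSets (DesSet σ) k, q ^ starMaj σ S


/-!
Fix σ with descent set D, |D| = d. Starring i ∈ D lowers maj by #{x ∈ D | i ≤ x}, and this
rank maps D bijectively onto {1,…,d}. Hence the sum over the star sets of σ depends only on
(maj σ, des σ): it is q^(maj σ − (1+⋯+d)) · W(d,k), where W(d,k) = `starWeight q d k` sums
q^(Σ ({1,…,d} \ T)) over the k-subsets T of {1,…,d} (a shifted Gaussian binomial).

Inserting n+1 into τ ∈ 𝔖_n at the end or inside a descent keeps des τ = d and raises maj by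
0, 1, …, d; inserting it at the front or inside an ascent raises des to d+1 and maj by
d+1, …, n. The recursion thus reduces to
  [d+1]·W(d,k) + [n−d]·W(d+1,k) = [n+1−k]·(W(d,k) + W(d,k−1)),
which follows from the Pascal rule W(d+1,k+1) = W(d,k) + q^(d+1)·W(d,k+1) and the absorption
rule q^(d−k)·[k+1]·W(d,k+1) = [d−k]·W(d,k). Finally D_{n,n−1} = 1 follows from the recursion,
since D_{n,n} = 0.
-/

section Counting

lemma sum_card_filter_lt {α M : Type*} [LinearOrder α] [AddCommMonoid M] (s : Finset α)
    (g : ℕ → M) : ∑ a ∈ s, g #{x ∈ s | x < a} = ∑ i ∈ range #s, g i := by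
  induction s using Finset.induction_on_max with
  | empty => simp
  | insert a s hmax ih =>
    have ha : a ∉ s := fun h => (hmax a h).false
    rw [sum_insert ha, card_insert_of_notMem ha, sum_range_succ, add_comm, filter_insert,
      if_neg (lt_irrefl a), filter_true_of_mem hmax, ← ih]
    congr 1
    refine sum_congr rfl fun b hb => ?_
    rw [filter_insert, if_neg (hmax b hb).not_gt]

lemma sum_card_filter_gt {α M : Type*} [LinearOrder α] [AddCommMonoid M] (s : Finset α)
    (g : ℕ → M) : ∑ a ∈ s, g #{x ∈ s | a < x} = ∑ i ∈ range #s, g i :=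
  sum_card_filter_lt (α := αᵒᵈ) s g

lemma card_filter_le_eq_card_filter_lt_insert {D : Finset ℕ} {m p : ℕ} (hD : D ⊆ range m)
    (hp : p ∈ insert m D) : #{d ∈ D | p ≤ d} = #{x ∈ insert m D | p < x} := by
  have hlt (d : ℕ) (hd : d ∈ D) : d < m := mem_range.mp (hD hd)
  rcases mem_insert.mp hp with rfl | hpD
  · rw [filter_false_of_mem fun d hd => (hlt d hd).not_ge,
      filter_false_of_mem fun x hx => by rcases mem_insert.mp hx with rfl | hx <;> grind]
  · have hfilter : {d ∈ D | p ≤ d} = insert p {d ∈ D | p < d} := by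
      ext d; simp only [mem_filter, mem_insert]; constructor
      · rintro ⟨hd, h⟩; rcases h.lt_or_eq with h | rfl <;> tauto
      · rintro (rfl | ⟨hd, h⟩) <;> [exact ⟨hpD, le_rfl⟩; exact ⟨hd, h.le⟩]
    rw [hfilter, filter_insert, if_pos (hlt p hpD), card_insert_of_notMem (by simp),
      card_insert_of_notMem fun h => (hlt m (mem_filter.mp h).1).false]

lemma card_filter_le_add_eq {D : Finset ℕ} {m p : ℕ} (hp : p ∈ range m \ D) :
    #{d ∈ D | p ≤ d} + p = #D + #{x ∈ range m \ D | x < p} := by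
  have hpm := mem_range.mp (mem_sdiff.mp hp).1
  have hD' := card_filter_add_card_filter_not (s := D) (p ≤ ·)
  have hp' := card_filter_add_card_filter_not (s := range p) (· ∈ D)
  have h1 : {d ∈ D | ¬ p ≤ d} = {x ∈ range p | x ∈ D} := by
    ext x; simp only [mem_filter, mem_range, not_le]
    exact ⟨fun h => ⟨h.2, h.1⟩, fun h => ⟨h.2, h.1⟩⟩
  have h2 : {x ∈ range m \ D | x < p} = {x ∈ range p | x ∉ D} := by
    ext x; simp only [mem_filter, mem_sdiff, mem_range]
    exact ⟨fun h => ⟨h.2, h.1.2⟩, fun h => ⟨⟨h.1.trans hpm, h.2⟩, h.1⟩⟩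
  rw [card_range, ← h1] at hp'
  rw [h2]
  omega

lemma starSets_eq_powersetCard (D : Finset ℕ) (k : ℕ) : starSets D k = D.powersetCard k :=
  powersetCard_eq_filter.symm

lemma strictAntiOn_card_filter_le {α : Type*} [LinearOrder α] (D : Finset α) :
    StrictAntiOn (fun a => #{x ∈ D | a ≤ x}) D := by
  intro a ha b _ hab
  refine card_lt_card ⟨monotone_filter_right _ fun x _ hx => hab.le.trans hx, fun h => ?_⟩
  exact (lt_of_lt_of_le hab (mem_filter.mp (h (mem_filter.mpr ⟨ha, le_rfl⟩))).2).false

lemma image_card_filter_le {α : Type*} [LinearOrder α] (D : Finset α) :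
    D.image (fun a => #{x ∈ D | a ≤ x}) = Icc 1 #D := by
  refine eq_of_subset_of_card_le (fun i hi => ?_) ?_
  · obtain ⟨a, ha, rfl⟩ := mem_image.mp hi
    exact mem_Icc.mpr ⟨card_pos.mpr ⟨a, mem_filter.mpr ⟨ha, le_rfl⟩⟩, card_filter_le _ _⟩
  · rw [card_image_of_injOn (strictAntiOn_card_filter_le D).injOn, Nat.card_Icc,
      Nat.add_sub_cancel]

lemma sum_Icc_card_le_sum {D : Finset ℕ} (hD : 0 ∉ D) : ∑ i ∈ Icc 1 #D, i ≤ ∑ a ∈ D, a := by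
  have himage : D.image (fun a => #{x ∈ D | x ≤ a}) = Icc 1 #D :=
    image_card_filter_le (α := ℕᵒᵈ) D
  have hinj : Set.InjOn (fun a => #{x ∈ D | x ≤ a}) D :=
    (strictAntiOn_card_filter_le (α := ℕᵒᵈ) D).injOn
  rw [← himage, sum_image hinj]
  refine sum_le_sum fun a _ => ?_
  calc #{x ∈ D | x ≤ a} ≤ #(Icc 1 a) := card_le_card fun x hx => by
        have := (mem_filter.mp hx)
        exact mem_Icc.mpr ⟨Nat.one_le_iff_ne_zero.mpr (ne_of_mem_of_not_mem this.1 hD), this.2⟩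
    _ = a := by simp

lemma sum_starSets_image {M : Type*} [AddCommMonoid M] {D : Finset ℕ} {φ : ℕ → ℕ}
    (hφ : Set.InjOn φ D) (k : ℕ) (g : Finset ℕ → M) :
    ∑ T ∈ starSets (D.image φ) k, g T = ∑ S ∈ starSets D k, g (S.image φ) := by
  rw [starSets, starSets, powerset_image, filter_image,
    sum_image ((image_injOn_powerset_of_injOn hφ).mono (filter_subset _ _))]
  refine sum_congr (filter_congr fun S hS => ?_) fun _ _ => rfl
  rw [card_image_of_injOn (hφ.mono (mem_powerset.mp hS))]

end Counting

section QNum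

variable {R : Type*} [CommRing R] (q : R)

@[simp] lemma qnum_one : qnum q 1 = 1 := by simp [qnum]

lemma qnum_add (a b : ℕ) : qnum q (a + b) = qnum q a + q ^ a * qnum q b := by
  simp [qnum, Finset.sum_range_add, Finset.mul_sum, pow_add]

lemma qnum_succ (a : ℕ) : qnum q (a + 1) = 1 + q * qnum q a := by
  rw [add_comm, qnum_add]; simp [qnum]

lemma qnum_mul_sub_one (a : ℕ) : qnum q a * (q - 1) = q ^ a - 1 := geom_sum_mul q a

end QNum

section StarWeight

variable {R : Type*} [CommRing R] (q : R)

def starWeight (d k : ℕ) : R :=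
  ∑ T ∈ (Icc 1 d).powersetCard k, q ^ ∑ i ∈ Icc 1 d \ T, i

lemma starWeight_eq_zero {d k : ℕ} (h : d < k) : starWeight q d k = 0 := by
  rw [starWeight, powersetCard_eq_empty.mpr (by simpa using h), sum_empty]

lemma starWeight_zero (d : ℕ) : starWeight q d 0 = q ^ ∑ i ∈ Icc 1 d, i := by
  simp [starWeight]

lemma starWeight_succ_zero (d : ℕ) : starWeight q (d + 1) 0 = q ^ (d + 1) * starWeight q d 0 := by
  rw [starWeight_zero, starWeight_zero, sum_Icc_succ_top (by omega), pow_add, mul_comm]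

lemma starWeight_succ_succ (d k : ℕ) :
    starWeight q (d + 1) (k + 1) = starWeight q d k + q ^ (d + 1) * starWeight q d (k + 1) := by
  have hnotMem : d + 1 ∉ Icc 1 d := by simp
  have hIcc : Icc 1 (d + 1) = insert (d + 1) (Icc 1 d) := by ext; simp; omega
  have hsub {j : ℕ} {T : Finset ℕ} (hT : T ∈ (Icc 1 d).powersetCard j) : d + 1 ∉ T :=
    fun h => hnotMem ((mem_powersetCard.mp hT).1 h)
  have hinj : Set.InjOn (insert (d + 1)) ((Icc 1 d).powersetCard k : Set (Finset ℕ)) :=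
    fun T hT U hU hTU => by
      rw [← erase_insert (hsub hT), hTU, erase_insert (hsub hU)]
  rw [starWeight, hIcc, powersetCard_succ_insert hnotMem, sum_union, sum_image hinj, add_comm,
    starWeight, starWeight, mul_sum]
  · congr 1
    · refine sum_congr rfl fun T _ => ?_
      rw [insert_sdiff_insert, sdiff_insert_of_notMem hnotMem]
    · refine sum_congr rfl fun T hT => ?_
      rw [insert_sdiff_of_notMem _ (hsub hT), sum_insert (fun h => hnotMem (mem_sdiff.mp h).1),
        pow_add]
  · refine disjoint_left.mpr fun T hT hT' => ?_
    obtain ⟨U, -, rfl⟩ := mem_image.mp hT'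
    exact hsub hT (mem_insert_self _ _)

lemma starWeight_absorb (d k : ℕ) :
    q ^ (d - k) * qnum q (k + 1) * starWeight q d (k + 1) = qnum q (d - k) * starWeight q d k := by
  induction d generalizing k with
  | zero => simp [starWeight_eq_zero, qnum]
  | succ d ih =>
    cases k with
    | zero =>
      have ih0 := ih 0
      simp only [Nat.sub_zero, zero_add, qnum_one, mul_one] at ih0 ⊢
      rw [starWeight_succ_succ, starWeight_succ_zero, qnum_succ q d]
      linear_combination q ^ (d + 2) * ih0
    | succ k =>
      rcases le_or_gt d k with hdk | hkd
      · rw [Nat.sub_eq_zero_of_le (by omega : d + 1 ≤ k + 1)]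
        simp [qnum, starWeight_eq_zero q (by omega : d + 1 < k + 1 + 1)]
      obtain ⟨a, rfl⟩ : ∃ a, d = k + 1 + a := ⟨d - (k + 1), by omega⟩
      have ih1 := ih (k + 1)
      have ih0 := ih k
      rw [show k + 1 + a - (k + 1) = a by omega] at ih1
      rw [show k + 1 + a - k = a + 1 by omega] at ih0
      rw [show k + 1 + a + 1 - (k + 1) = a + 1 by omega, starWeight_succ_succ,
        starWeight_succ_succ]
      have hk := qnum_add q (k + 1) 1
      have ha := qnum_succ q a
      rw [qnum_one, mul_one] at hk
      linear_combination q ^ (k + 1 + a + 2) * ih1 + ih0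
        + q ^ (a + 1) * starWeight q (k + 1 + a) (k + 1) * hk
        - q ^ (k + 1 + a + 1) * starWeight q (k + 1 + a) (k + 1) * ha

lemma qnum_mul_starWeight_add (n : ℕ) {d : ℕ} (hd : d ≤ n) (k : ℕ) :
    qnum q (d + 1) * starWeight q d k + qnum q (n - d) * starWeight q (d + 1) k =
      qnum q (n + 1 - k) * (starWeight q d k + if k = 0 then 0 else starWeight q d (k - 1)) := by
  cases k with
  | zero =>
    have hsplit := qnum_add q (d + 1) (n - d)
    rw [show d + 1 + (n - d) = n + 1 by omega] at hsplit
    rw [if_pos rfl, add_zero, Nat.sub_zero, hsplit, starWeight_succ_zero]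
    ring
  | succ k =>
    rw [if_neg k.succ_ne_zero, Nat.add_sub_cancel]
    rcases lt_or_ge d k with hdk | hkd
    · simp [starWeight_eq_zero q hdk, starWeight_eq_zero q (by omega : d < k + 1),
        starWeight_eq_zero q (by omega : d + 1 < k + 1)]
    have habs := starWeight_absorb q d k
    have hd1 := qnum_add q (d - k) (k + 1)
    have hnk := qnum_add q (d - k) (n - d)
    rw [show d - k + (k + 1) = d + 1 by omega] at hd1
    rw [show d - k + (n - d) = n + 1 - (k + 1) by omega] at hnk
    have hgk := qnum_mul_sub_one q (k + 1)
    have hgd := qnum_mul_sub_one q (d - k)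
    have hpow : q ^ (d + 1) = q ^ (d - k) * q ^ (k + 1) := by rw [← pow_add]; congr 1; omega
    -- `(q - 1) * habs` turns Pascal's rule into W(d+1,k+1) = q^(d-k) (W(d,k+1) + W(d,k))
    rw [starWeight_succ_succ, hd1, hnk, hpow]
    linear_combination (1 + qnum q (n - d) * (q - 1)) * habs
      - qnum q (n - d) * starWeight q d (k + 1) * q ^ (d - k) * hgk
      + qnum q (n - d) * starWeight q d k * hgd

def starredSum (k m d : ℕ) : R := q ^ (m - ∑ i ∈ Icc 1 d, i) * starWeight q d k

lemma sum_starredSum_insert (n : ℕ) {k m d : ℕ} (hd : d ≤ n) (hm : ∑ i ∈ Icc 1 d, i ≤ m) :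
    ∑ i ∈ range (d + 1), starredSum q k (m + i) d +
        ∑ i ∈ range (n - d), starredSum q k (m + d + 1 + i) (d + 1) =
      qnum q (n + 1 - k) *
        (starredSum q k m d + if k = 0 then 0 else starredSum q (k - 1) m d) := by
  have key := qnum_mul_starWeight_add q n hd k
  have h1 (i : ℕ) : m + i - ∑ j ∈ Icc 1 d, j = (m - ∑ j ∈ Icc 1 d, j) + i := by omega
  have h2 (i : ℕ) : m + d + 1 + i - ∑ j ∈ Icc 1 (d + 1), j = (m - ∑ j ∈ Icc 1 d, j) + i := by
    rw [sum_Icc_succ_top (by omega)]; omega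
  simp only [starredSum, h1, h2, pow_add, ← sum_mul, ← mul_sum]
  simp only [qnum] at key ⊢
  split_ifs at key ⊢ <;> linear_combination q ^ (m - ∑ j ∈ Icc 1 d, j) * key

end StarWeight

section Insertion

variable {n : ℕ}

lemma oneline_le (σ : Equiv.Perm (Fin n)) (i : ℕ) : oneline σ i ≤ n := by
  unfold oneline
  split
  · exact (σ _).isLt
  · omega

lemma oneline_pos_iff (σ : Equiv.Perm (Fin n)) (i : ℕ) : 0 < oneline σ i ↔ 1 ≤ i ∧ i ≤ n := by
  unfold oneline
  split <;> simp_all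

lemma mem_DesSet_iff (σ : Equiv.Perm (Fin n)) (i : ℕ) :
    i ∈ DesSet σ ↔ 1 ≤ i ∧ i < n ∧ oneline σ (i + 1) < oneline σ i := by
  simp only [DesSet, mem_filter, mem_Icc]
  omega

/-- Inserts the value `n+1` (that is, `Fin.last n`) at position `p` (counted from 0) of the
one-line word of `τ`. -/
def insertMax (τ : Equiv.Perm (Fin n)) (p : Fin (n + 1)) : Equiv.Perm (Fin (n + 1)) :=
  (finSuccEquiv' p).trans ((Equiv.optionCongr τ).trans (finSuccEquiv' (Fin.last n)).symm)

lemma insertMax_apply_self (τ : Equiv.Perm (Fin n)) (p : Fin (n + 1)) :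
    insertMax τ p p = Fin.last n := by
  simp [insertMax]

lemma insertMax_apply_succAbove (τ : Equiv.Perm (Fin n)) (p : Fin (n + 1)) (j : Fin n) :
    insertMax τ p (p.succAbove j) = (τ j).castSucc := by
  simp [insertMax, finSuccEquiv'_succAbove, ← Fin.succAbove_last]

lemma oneline_insertMax (τ : Equiv.Perm (Fin n)) (p : Fin (n + 1)) (i : ℕ) :
    oneline (insertMax τ p) i =
      if i ≤ p then oneline τ i else if i = p + 1 then n + 1 else oneline τ (i - 1) := by
  have hp := p.isLt
  rcases Nat.eq_zero_or_pos i with rfl | hi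
  · simp [oneline]
  split_ifs with hip hip'
  · have key : (⟨i - 1, by omega⟩ : Fin (n + 1)) = p.succAbove ⟨i - 1, by omega⟩ := by
      rw [Fin.succAbove_of_castSucc_lt _ _ (by simp [Fin.lt_def]; omega)]; rfl
    simp only [oneline, dif_pos (show 1 ≤ i ∧ i ≤ n + 1 by omega),
      dif_pos (show 1 ≤ i ∧ i ≤ n by omega), key, insertMax_apply_succAbove, Fin.val_castSucc]
  · subst hip'
    simp [oneline, show (p : ℕ) ≤ n by omega, insertMax_apply_self]
  · rcases le_or_gt i (n + 1) with hin | hin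
    · have key : (⟨i - 1, by omega⟩ : Fin (n + 1)) = p.succAbove ⟨i - 2, by omega⟩ := by
        rw [Fin.succAbove_of_le_castSucc _ _ (by simp [Fin.le_def]; omega)]
        ext; simp; omega
      simp only [oneline, dif_pos (show 1 ≤ i ∧ i ≤ n + 1 by omega),
        dif_pos (show 1 ≤ i - 1 ∧ i - 1 ≤ n by omega), key, insertMax_apply_succAbove,
        Fin.val_castSucc, show i - 1 - 1 = i - 2 by omega]
    · simp [oneline, show ¬ i ≤ n + 1 by omega, show ¬ i - 1 ≤ n by omega]

lemma insertMax_bijective :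
    Function.Bijective (fun x : Equiv.Perm (Fin n) × Fin (n + 1) => insertMax x.1 x.2) := by
  refine (Fintype.bijective_iff_injective_and_card _).mpr ⟨?_, ?_⟩
  · rintro ⟨τ, p⟩ ⟨τ', p'⟩ h
    simp only at h
    obtain rfl : p = p' := by
      by_contra hne
      obtain ⟨j, rfl⟩ := Fin.exists_succAbove_eq hne
      have := insertMax_apply_self τ (p'.succAbove j)
      rw [h, insertMax_apply_succAbove] at this
      exact (Fin.castSucc_lt_last _).ne this
    obtain rfl : τ = τ' := Equiv.ext fun j =>
      Fin.castSucc_injective n <| by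
        rw [← insertMax_apply_succAbove, ← insertMax_apply_succAbove, h]
    rfl
  · simp [Fintype.card_perm, Nat.factorial_succ, mul_comm]

lemma mem_DesSet_insertMax (τ : Equiv.Perm (Fin n)) (p : Fin (n + 1)) (i : ℕ) :
    i ∈ DesSet (insertMax τ p) ↔
      (i < p ∧ i ∈ DesSet τ) ∨ (i = p + 1 ∧ (p : ℕ) < n) ∨ (p + 1 < i ∧ i - 1 ∈ DesSet τ) := by
  rcases i with _ | i
  · simp [mem_DesSet_iff]
  simp only [mem_DesSet_iff, oneline_insertMax, Nat.add_sub_cancel]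
  have := oneline_le τ i
  have := oneline_le τ (i + 1)
  have := (oneline_pos_iff τ i).mpr
  have := (oneline_pos_iff τ (i + 1)).mpr
  have := (oneline_pos_iff τ (i + 1 + 1)).mpr
  split_ifs <;> omega

lemma DesSet_insertMax (τ : Equiv.Perm (Fin n)) (p : Fin (n + 1)) :
    DesSet (insertMax τ p) = (DesSet τ).image (fun d => d + if (p : ℕ) ≤ d then 1 else 0) ∪
      if (p : ℕ) < n ∧ (p : ℕ) ∉ DesSet τ then {(p : ℕ) + 1} else ∅ := by
  ext i
  have hpn : (p : ℕ) ∈ DesSet τ → (p : ℕ) < n := fun h => ((mem_DesSet_iff τ p).mp h).2.1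
  have himage : i ∈ (DesSet τ).image (fun d => d + if (p : ℕ) ≤ d then 1 else 0) ↔
      (i < p ∧ i ∈ DesSet τ) ∨ (i = p + 1 ∧ (p : ℕ) ∈ DesSet τ) ∨
        (p + 1 < i ∧ i - 1 ∈ DesSet τ) := by
    rw [mem_image]
    constructor
    · rintro ⟨d, hd, rfl⟩
      split_ifs with h
      · rcases h.lt_or_eq with h | rfl
        · exact .inr (.inr ⟨by omega, by simpa using hd⟩)
        · exact .inr (.inl ⟨rfl, hd⟩)
      · exact .inl ⟨by omega, by simpa using hd⟩
    · rintro (⟨h, hi⟩ | ⟨rfl, hp⟩ | ⟨h, hi⟩)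
      · exact ⟨i, hi, by simp; omega⟩
      · exact ⟨p, hp, by simp⟩
      · exact ⟨i - 1, hi, by split_ifs <;> omega⟩
  rw [mem_union, himage, mem_DesSet_insertMax]
  by_cases hp : (p : ℕ) ∈ DesSet τ
  · simp [hp, hpn hp]
  · by_cases hpn' : (p : ℕ) < n <;> simp [hp, hpn', or_comm, or_left_comm]

lemma majNum_desNum_insertMax (τ : Equiv.Perm (Fin n)) (p : Fin (n + 1)) :
    majNum (insertMax τ p) = majNum τ + #{d ∈ DesSet τ | (p : ℕ) ≤ d} +
        (if (p : ℕ) < n ∧ (p : ℕ) ∉ DesSet τ then (p : ℕ) + 1 else 0) ∧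
      desNum (insertMax τ p) = desNum τ +
        (if (p : ℕ) < n ∧ (p : ℕ) ∉ DesSet τ then 1 else 0) := by
  have hinj : Set.InjOn (fun d => d + if (p : ℕ) ≤ d then 1 else 0) (DesSet τ) := by
    intro a _ b _ h
    simp only at h
    split_ifs at h <;> omega
  have hdisj : Disjoint ((DesSet τ).image (fun d => d + if (p : ℕ) ≤ d then 1 else 0))
      (if (p : ℕ) < n ∧ (p : ℕ) ∉ DesSet τ then {(p : ℕ) + 1} else ∅) := by
    split_ifs with hnew
    · refine disjoint_singleton_right.mpr fun h => hnew.2 ?_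
      obtain ⟨d, hd, hdp⟩ := mem_image.mp h
      obtain rfl : d = p := by split_ifs at hdp <;> omega
      exact hd
    · exact disjoint_empty_right _
  rw [majNum, desNum, DesSet_insertMax, sum_union hdisj, card_union_of_disjoint hdisj,
    sum_image hinj, card_image_of_injOn hinj, sum_add_distrib, sum_boole]
  split_ifs <;> simp [majNum, desNum, add_assoc]

lemma DesSet_subset_range (σ : Equiv.Perm (Fin n)) : DesSet σ ⊆ range n :=
  fun d hd => mem_range.mpr ((mem_DesSet_iff σ d).mp hd).2.1

lemma sum_insertMax {M : Type*} [AddCommMonoid M] (τ : Equiv.Perm (Fin n)) (f : ℕ → ℕ → M) :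
    ∑ p, f (majNum (insertMax τ p)) (desNum (insertMax τ p)) =
      ∑ i ∈ range (desNum τ + 1), f (majNum τ + i) (desNum τ) +
        ∑ i ∈ range (n - desNum τ), f (majNum τ + desNum τ + 1 + i) (desNum τ + 1) := by
  have hD := DesSet_subset_range τ
  have hnD : n ∉ DesSet τ := fun h => (mem_range.mp (hD h)).false
  have hA : {p ∈ range (n + 1) | p < n ∧ p ∉ DesSet τ} = range n \ DesSet τ := by
    ext p; simp only [mem_filter, mem_sdiff, mem_range]
    exact ⟨fun h => h.2, fun h => ⟨by omega, h⟩⟩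
  have hB : {p ∈ range (n + 1) | ¬ (p < n ∧ p ∉ DesSet τ)} = insert n (DesSet τ) := by
    ext p; simp only [mem_filter, mem_range, mem_insert]
    constructor
    · rintro ⟨h1, h2⟩
      by_cases h : p = n
      · exact .inl h
      · exact .inr (by_contra fun h' => h2 ⟨by omega, h'⟩)
    · rintro (rfl | h)
      · omega
      · exact ⟨(mem_range.mp (hD h)).trans (by omega), fun h' => h'.2 h⟩
  calc ∑ p, f (majNum (insertMax τ p)) (desNum (insertMax τ p))
      = ∑ p ∈ range (n + 1), if p < n ∧ p ∉ DesSet τ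
          then f (majNum τ + #{d ∈ DesSet τ | p ≤ d} + (p + 1)) (desNum τ + 1)
          else f (majNum τ + #{d ∈ DesSet τ | p ≤ d}) (desNum τ) := by
        rw [← Fin.sum_univ_eq_sum_range]
        refine sum_congr rfl fun p _ => ?_
        obtain ⟨hmaj, hdes⟩ := majNum_desNum_insertMax τ p
        rw [hmaj, hdes]
        split_ifs <;> rfl
    _ = ∑ p ∈ range n \ DesSet τ,
            f (majNum τ + desNum τ + 1 + #{x ∈ range n \ DesSet τ | x < p}) (desNum τ + 1) +
          ∑ p ∈ insert n (DesSet τ),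
            f (majNum τ + #{x ∈ insert n (DesSet τ) | p < x}) (desNum τ) := by
        rw [sum_ite, hA, hB]
        congr 1 <;> refine sum_congr rfl fun p hp => ?_
        · have := card_filter_le_add_eq hp
          rw [desNum]
          congr 1
          omega
        · rw [card_filter_le_eq_card_filter_lt_insert hD hp]
    _ = _ := by
        rw [sum_card_filter_lt _ (fun i => f (majNum τ + desNum τ + 1 + i) (desNum τ + 1)),
          sum_card_filter_gt _ (fun i => f (majNum τ + i) (desNum τ)),
          card_insert_of_notMem hnD, card_sdiff_of_subset hD, card_range, add_comm]
        rfl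

lemma sum_perm_succ {M : Type*} [AddCommMonoid M] (f : ℕ → ℕ → M) :
    ∑ σ : Equiv.Perm (Fin (n + 1)), f (majNum σ) (desNum σ) =
      ∑ τ : Equiv.Perm (Fin n), (∑ i ∈ range (desNum τ + 1), f (majNum τ + i) (desNum τ) +
        ∑ i ∈ range (n - desNum τ), f (majNum τ + desNum τ + 1 + i) (desNum τ + 1)) := by
  rw [← Fintype.sum_bijective _ insertMax_bijective _ _ fun _ => rfl, Fintype.sum_prod_type]
  exact sum_congr rfl fun τ _ => sum_insertMax τ f

end Insertion

section Dmaj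

variable {R : Type*} [CommRing R] (q : R) {n : ℕ}

lemma desNum_le (σ : Equiv.Perm (Fin n)) : desNum σ ≤ n - 1 :=
  calc desNum σ ≤ #(Icc 1 (n - 1)) := card_le_card (filter_subset _ _)
    _ = n - 1 := by simp

lemma sum_Icc_desNum_le_majNum (σ : Equiv.Perm (Fin n)) :
    ∑ i ∈ Icc 1 (desNum σ), i ≤ majNum σ :=
  sum_Icc_card_le_sum fun h => ((mem_DesSet_iff σ 0).mp h).1.not_gt Nat.zero_lt_one

lemma sum_pow_starMaj (σ : Equiv.Perm (Fin n)) (k : ℕ) :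
    ∑ S ∈ starSets (DesSet σ) k, q ^ starMaj σ S = starredSum q k (majNum σ) (desNum σ) := by
  have hD (d : ℕ) (hd : d ∈ DesSet σ) : 1 ≤ d ∧ d < n := by
    have := (mem_DesSet_iff σ d).mp hd; omega
  have hcard (i : ℕ) : #(DesSet σ ∩ Icc i (n - 1)) = #{x ∈ DesSet σ | i ≤ x} := by
    congr 1; ext x; simp only [mem_inter, mem_Icc, mem_filter]
    exact ⟨fun h => ⟨h.1, h.2.1⟩, fun h => ⟨h.1, h.2, by have := hD x h.1; omega⟩⟩
  have hmaj := sum_Icc_desNum_le_majNum σ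
  have hinj := (strictAntiOn_card_filter_le (DesSet σ)).injOn
  rw [starredSum, starWeight, ← starSets_eq_powersetCard, desNum, ← image_card_filter_le,
    sum_starSets_image hinj, mul_sum]
  rw [desNum, ← image_card_filter_le] at hmaj
  refine sum_congr rfl fun S hS => ?_
  have hSD : S ⊆ DesSet σ := mem_powerset.mp (mem_filter.mp hS).1
  have hsdiff := sum_sdiff (f := id)
    (image_subset_image (f := fun a => #{x ∈ DesSet σ | a ≤ x}) hSD)
  rw [sum_image (hinj.mono hSD)] at hsdiff
  simp only [id] at hsdiff
  rw [← pow_add, starMaj, sum_congr rfl fun i _ => hcard i]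
  congr 1
  omega

lemma Dmaj_eq_sum (k : ℕ) :
    Dmaj q n k = ∑ σ : Equiv.Perm (Fin n), starredSum q k (majNum σ) (desNum σ) :=
  sum_congr rfl fun σ _ => sum_pow_starMaj q σ k

lemma Dmaj_succ_eq_zero {k : ℕ} (hk : n < k) : Dmaj q (n + 1) k = 0 := by
  rw [Dmaj_eq_sum]
  refine sum_eq_zero fun σ _ => ?_
  rw [starredSum, starWeight_eq_zero q ((desNum_le σ).trans_lt (by omega)), mul_zero]

lemma Dmaj_succ (k : ℕ) :
    Dmaj q (n + 1) k =
      qnum q (n + 1 - k) * (Dmaj q n k + if k = 0 then 0 else Dmaj q n (k - 1)) := by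
  rw [Dmaj_eq_sum, sum_perm_succ (starredSum q k), sum_congr rfl fun τ _ =>
      sum_starredSum_insert q n ((desNum_le τ).trans (n.sub_le 1)) (sum_Icc_desNum_le_majNum τ),
    ← mul_sum, sum_add_distrib, Dmaj_eq_sum]
  split_ifs
  · simp
  · rw [Dmaj_eq_sum]

lemma Dmaj_succ_self : Dmaj q (n + 1) n = 1 := by
  induction n with
  | zero => simp [Dmaj_succ, Dmaj_eq_sum, starredSum, starWeight_zero, majNum, desNum, DesSet]
  | succ n ih =>
    rw [Dmaj_succ, if_neg n.succ_ne_zero, Dmaj_succ_eq_zero q n.lt_succ_self, Nat.add_sub_cancel,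
      ih]
    simp

end Dmaj

/-- D^{maj}_{n,n−1}(q) = 1 for n ≥ 1, and for all n ≥ 2 and 0 ≤ k ≤ n−2,
D^{maj}_{n,k}(q) = [n−k]_q · D^{maj}_{n−1,k}(q) + [n−k]_q · D^{maj}_{n−1,k−1}(q),
with the convention D^{maj}_{n,−1}(q) = 0. -/
theorem statement7 {R : Type*} [CommRing R] (q : R) :
    (∀ n : ℕ, 1 ≤ n → Dmaj q n (n - 1) = 1) ∧
    (∀ n k : ℕ, 2 ≤ n → k ≤ n - 2 →
      Dmaj q n k =
        qnum q (n - k) * Dmaj q (n - 1) k +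
          qnum q (n - k) * (if k = 0 then 0 else Dmaj q (n - 1) (k - 1))) := by
  refine ⟨fun n hn => ?_, fun n k hn _ => ?_⟩
  all_goals obtain ⟨m, rfl⟩ : ∃ m, n = m + 1 := ⟨n - 1, by omega⟩
  · exact Dmaj_succ_self q
  · rw [Dmaj_succ, Nat.add_sub_cancel, mul_add]
end

section
/- For all n ≥ 1, all 0 ≤ k ≤ n−1, and every element q of a commutative ring, Σ_{(σ,T)∈𝔖^<_{n,k}} q^{inv(σ) − Σ_{i∈T} inv^{□,i+1}(σ)} = [n−k]_q! · S_{n,n−k}(q). (The exponent is a nonnegative integer.) -/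
open Finset

/-!
Write `F(n, k)` for the left-hand side and insert the letter `n + 1` into a permutation of
`[n]` after its first `a` letters. Starred ascents other than `a` move along, the ascent at `a`
is destroyed, and a new ascent appears at `a` when `a ≥ 1`, which may be starred or not. Either
way the statistic grows by the number of unstarred positions in `(a, n]`. As `a` runs over the
unstarred positions of `[0, n]` (resp. `[1, n]`) these numbers run through `0, …, n - |T|`
(resp. `0, …, n - 1 - |T|`), which produces a factor `[n + 1 - |T|]_q` (resp. `[n - |T|]_q`).
Hence `F(n+1, 0) = [n+1]_q F(n, 0)` and `F(n+1, k+1) = [n-k]_q (F(n, k+1) + F(n, k))`, the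
recurrence satisfied by `[n-k]_q! S_{n,n-k}(q)`.
-/

namespace StarredAscents

def natSuccAbove (a : ℕ) : ℕ ↪ ℕ :=
  ⟨fun i => if i < a then i else i + 1, fun i j hij => by
    dsimp only at hij; split_ifs at hij <;> omega⟩

lemma natSuccAbove_apply (a i : ℕ) : natSuccAbove a i = if i < a then i else i + 1 := rfl

lemma natSuccAbove_succ_add_one {a i : ℕ} (h : i ≠ a) :
    natSuccAbove a i + 1 = natSuccAbove (a + 1) (i + 1) := by
  simp only [natSuccAbove_apply]; split_ifs <;> omega

lemma Icc_one_succ_eq_insert_map {a n : ℕ} (ha : a ≤ n) :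
    Icc 1 (n + 1) = insert (a + 1) ((Icc 1 n).map (natSuccAbove (a + 1))) := by
  ext i
  simp only [mem_Icc, mem_insert, mem_map, natSuccAbove_apply]
  constructor
  · intro h
    by_cases hi : i = a + 1
    · exact .inl hi
    · exact .inr (if hlt : i < a + 1 then ⟨i, by grind⟩ else ⟨i - 1, by grind⟩)
  · rintro (rfl | ⟨j, hj, rfl⟩) <;> grind

lemma notMem_of_mem_powersetCard_erase {α : Type*} [DecidableEq α] {D T : Finset α} {a : α}
    {k : ℕ} (hT : T ∈ (D.erase a).powersetCard k) : a ∉ T :=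
  fun h => notMem_erase a D ((mem_powersetCard.1 hT).1 h)

lemma sum_powersetCard_succ {α M : Type*} [DecidableEq α] [AddCommMonoid M] (D : Finset α)
    (a : α) (k : ℕ) (f : Finset α → M) :
    ∑ T ∈ D.powersetCard (k + 1), f T = ∑ T ∈ (D.erase a).powersetCard (k + 1), f T +
      if a ∈ D then ∑ T ∈ (D.erase a).powersetCard k, f (insert a T) else 0 := by
  split_ifs with ha
  · conv_lhs => rw [← insert_erase ha]
    rw [powersetCard_succ_insert (notMem_erase a D), sum_union, sum_image]
    · intro T hT T' hT' h
      rw [← erase_insert (notMem_of_mem_powersetCard_erase hT), h,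
        erase_insert (notMem_of_mem_powersetCard_erase hT')]
    · refine disjoint_left.2 fun T hT hT' => notMem_of_mem_powersetCard_erase hT ?_
      obtain ⟨T', -, rfl⟩ := mem_image.1 hT'
      exact mem_insert_self a T'
  · rw [erase_eq_of_notMem ha, add_zero]

lemma sum_sum_powersetCard_erase {α M : Type*} [DecidableEq α] [AddCommMonoid M]
    (A D : Finset α) (k : ℕ) (g : α → Finset α → M) :
    ∑ a ∈ A, ∑ T ∈ (D.erase a).powersetCard k, g a T =
      ∑ T ∈ D.powersetCard k, ∑ a ∈ A \ T, g a T := by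
  have h : ∀ a, (D.erase a).powersetCard k = (D.powersetCard k).filter (a ∉ ·) := fun a => by
    ext T
    simp only [mem_powersetCard, subset_erase, mem_filter]
    tauto
  simp_rw [h, sdiff_eq_filter, sum_filter]
  exact sum_comm

section QNumbers

variable {R : Type*} [CommRing R] (q : R)

lemma qnum_succ (m : ℕ) : qnum q (m + 1) = 1 + q * qnum q m := by
  simp only [qnum, sum_range_succ', pow_zero, pow_succ', mul_sum]
  ring

lemma sum_pow_card_filter_lt {α : Type*} [LinearOrder α] (U : Finset α) :
    ∑ a ∈ U, q ^ #(U.filter (a < ·)) = qnum q #U := by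
  induction U using Finset.induction_on_max with
  | empty => simp [qnum]
  | insert m U hlt ih =>
    have hm : m ∉ U := fun h => lt_irrefl m (hlt m h)
    rw [sum_insert hm, card_insert_of_notMem hm, qnum_succ, ← ih, mul_sum, filter_insert,
      if_neg (lt_irrefl m), filter_eq_empty_iff.2 fun x hx => not_lt.2 (hlt x hx).le,
      card_empty, pow_zero]
    refine congrArg _ (sum_congr rfl fun a ha => ?_)
    rw [filter_insert, if_pos (hlt a ha), card_insert_of_notMem (by simp [hm]), pow_succ']

lemma sum_pow_card_Ioc_sdiff (b n : ℕ) (T : Finset ℕ) :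
    ∑ a ∈ Icc b n \ T, q ^ #(Ioc a n \ T) = qnum q #(Icc b n \ T) := by
  rw [← sum_pow_card_filter_lt]
  refine sum_congr rfl fun a ha => ?_
  congr 2
  ext x
  simp only [mem_sdiff, mem_Icc, mem_Ioc, mem_filter] at ha ⊢
  grind

lemma qfact_succ (m : ℕ) : qfact q (m + 1) = qfact q m * qnum q (m + 1) :=
  prod_range_succ _ _

lemma qStirling_eq_zero_of_lt : ∀ {n j : ℕ}, n < j → qStirling q n j = 0
  | 0, _ + 1, _ => rfl
  | n + 1, j + 1, h => by
    rw [qStirling, qStirling_eq_zero_of_lt (by omega), qStirling_eq_zero_of_lt (by omega),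
      mul_zero, add_zero]

end QNumbers

/- Words are functions `ℕ → ℕ` read at positions `1, …, n`; on `oneline σ` the statistics
below are `AscSet σ`, `invEnd σ` and `invNum σ` by definition. -/
def wordAsc (n : ℕ) (w : ℕ → ℕ) : Finset ℕ :=
  (Icc 1 (n - 1)).filter fun i => w i < w (i + 1)

def wordInvEnd (n : ℕ) (w : ℕ → ℕ) (j : ℕ) : ℕ :=
  #((Icc 1 n).filter fun i => i < j ∧ w j < w i)

def wordInv (n : ℕ) (w : ℕ → ℕ) : ℕ :=
  #((Icc 1 n ×ˢ Icc 1 n).filter fun p => p.1 < p.2 ∧ w p.2 < w p.1)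

lemma wordAsc_subset (n : ℕ) (w : ℕ → ℕ) : wordAsc n w ⊆ Icc 1 (n - 1) := filter_subset _ _

lemma wordInv_eq_sum_wordInvEnd (n : ℕ) (w : ℕ → ℕ) :
    wordInv n w = ∑ j ∈ Icc 1 n, wordInvEnd n w j := by
  rw [wordInv, card_eq_sum_card_fiberwise (f := Prod.snd) (t := Icc 1 n)
    (fun p hp => (mem_product.1 (mem_filter.1 hp).1).2)]
  refine sum_congr rfl fun j hj => card_nbij' Prod.fst (fun i => (i, j)) ?_ ?_ ?_ ?_ <;>
    intro x hx <;> simp only [coe_filter, mem_Icc, Set.mem_ofPred_eq] at hx hj ⊢ <;> grind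

def insertLetter (m a : ℕ) (w : ℕ → ℕ) (i : ℕ) : ℕ :=
  if i ≤ a then w i else if i = a + 1 then m else w (i - 1)

lemma insertLetter_self (m a : ℕ) (w : ℕ → ℕ) : insertLetter m a w (a + 1) = m := by
  simp [insertLetter]

lemma insertLetter_natSuccAbove (m a : ℕ) (w : ℕ → ℕ) (j : ℕ) :
    insertLetter m a w (natSuccAbove (a + 1) j) = w j := by
  simp only [insertLetter, natSuccAbove_apply]; split_ifs <;> first | rfl | (exfalso; omega)

def starredInv (n : ℕ) (w : ℕ → ℕ) (T : Finset ℕ) : ℕ :=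
  wordInv n w - ∑ i ∈ T, wordInvEnd n w (i + 1)

lemma sum_wordInvEnd_succ_le_wordInv {n : ℕ} (w : ℕ → ℕ) {T : Finset ℕ}
    (hT : T ⊆ Icc 1 (n - 1)) : ∑ i ∈ T, wordInvEnd n w (i + 1) ≤ wordInv n w := by
  rw [wordInv_eq_sum_wordInvEnd]
  calc ∑ i ∈ T, wordInvEnd n w (i + 1)
      = ∑ j ∈ T.map (addRightEmbedding 1), wordInvEnd n w j :=
        (sum_map T (addRightEmbedding 1) (wordInvEnd n w)).symm
    _ ≤ _ := sum_le_sum_of_subset fun j hj => ?_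
  obtain ⟨i, hi, rfl⟩ := mem_map.1 hj
  have := mem_Icc.1 (hT hi)
  simp only [addRightEmbedding_apply, mem_Icc]
  omega

section Insertion

variable {n a : ℕ} {w : ℕ → ℕ} {T : Finset ℕ}

lemma wordInvEnd_insertLetter_self (hw : ∀ i, w i ≤ n) :
    wordInvEnd (n + 1) (insertLetter (n + 1) a w) (a + 1) = 0 := by
  refine card_eq_zero.2 (filter_eq_empty_iff.2 fun i _ => ?_)
  rw [insertLetter_self, insertLetter]
  split_ifs <;> grind

lemma wordInvEnd_insertLetter_natSuccAbove (ha : a ≤ n) (hw : ∀ i, w i ≤ n) (j : ℕ) :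
    wordInvEnd (n + 1) (insertLetter (n + 1) a w) (natSuccAbove (a + 1) j) =
      wordInvEnd n w j + if a < j then 1 else 0 := by
  have hlt : ∀ i, natSuccAbove (a + 1) i < natSuccAbove (a + 1) j ↔ i < j := fun i => by
    simp only [natSuccAbove_apply]; split_ifs <;> omega
  have hmax : a + 1 < natSuccAbove (a + 1) j ∧ w j < n + 1 ↔ a < j := by
    simp only [natSuccAbove_apply]; split_ifs <;> grind
  rw [wordInvEnd, Icc_one_succ_eq_insert_map ha, filter_insert, filter_map]
  simp only [Function.comp_def, insertLetter_natSuccAbove, insertLetter_self, hlt, hmax]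
  split_ifs
  · rw [card_insert_of_notMem (by simp [natSuccAbove_apply]; grind), card_map, wordInvEnd]
  · rw [card_map, wordInvEnd, add_zero]

lemma wordInv_insertLetter (ha : a ≤ n) (hw : ∀ i, w i ≤ n) :
    wordInv (n + 1) (insertLetter (n + 1) a w) = wordInv n w + (n - a) := by
  have hfilter : (Icc 1 n).filter (a < ·) = Ioc a n := by ext; simp; omega
  rw [wordInv_eq_sum_wordInvEnd, wordInv_eq_sum_wordInvEnd, Icc_one_succ_eq_insert_map ha,
    sum_insert (by simp only [mem_map, natSuccAbove_apply]; grind), sum_map,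
    wordInvEnd_insertLetter_self hw, zero_add]
  simp_rw [wordInvEnd_insertLetter_natSuccAbove ha hw]
  rw [sum_add_distrib, sum_boole, hfilter, Nat.card_Ioc, Nat.cast_id]

lemma mem_wordAsc_insertLetter_self (ha : a ≤ n) (hw : ∀ i, w i ≤ n) :
    a ∈ wordAsc (n + 1) (insertLetter (n + 1) a w) ↔ 1 ≤ a := by
  have := hw a
  simp [wordAsc, insertLetter]
  omega

lemma wordAsc_insertLetter_erase (ha : a ≤ n) (hw : ∀ i, w i ≤ n) :
    (wordAsc (n + 1) (insertLetter (n + 1) a w)).erase a =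
      ((wordAsc n w).erase a).map (natSuccAbove a) := by
  ext i
  simp only [wordAsc, mem_erase, mem_filter, mem_map, mem_Icc, natSuccAbove_apply, insertLetter]
  have := hw i
  have := hw (i - 1)
  constructor
  · intro h
    exact if hlt : i < a then ⟨i, by grind⟩ else ⟨i - 1, by grind⟩
  · rintro ⟨j, hj, rfl⟩
    grind

/-- The inserted maximal letter adds `n - a` inversions, and one to the inversion count
ending at each starred ascent to its right; the difference counts unstarred positions. -/
lemma starredInv_insertLetter_map (ha : a ≤ n) (hw : ∀ i, w i ≤ n)
    (hT : T ⊆ (wordAsc n w).erase a) :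
    starredInv (n + 1) (insertLetter (n + 1) a w) (T.map (natSuccAbove a)) =
      starredInv n w T + #(Ioc a n \ T) := by
  have hT' : ∀ i ∈ T, i ≠ a ∧ 1 ≤ i ∧ i ≤ n - 1 := fun i hi => by
    have := mem_erase.1 (hT hi)
    exact ⟨this.1, mem_Icc.1 (wordAsc_subset n w this.2)⟩
  have hsum :
      ∑ i ∈ T.map (natSuccAbove a), wordInvEnd (n + 1) (insertLetter (n + 1) a w) (i + 1) =
        ∑ i ∈ T, wordInvEnd n w (i + 1) + #(T ∩ Ioc a n) := by
    rw [sum_map, ← filter_mem_eq_inter, card_filter, ← sum_add_distrib]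
    refine sum_congr rfl fun i hi => ?_
    obtain ⟨hia, hi1, hin⟩ := hT' i hi
    rw [natSuccAbove_succ_add_one hia, wordInvEnd_insertLetter_natSuccAbove ha hw]
    simp only [mem_Ioc]
    congr 2
    grind
  have hcard := card_sdiff_add_card_inter (Ioc a n) T
  have hle := sum_wordInvEnd_succ_le_wordInv w
    (fun i hi => mem_Icc.2 (hT' i hi).2 : T ⊆ Icc 1 (n - 1))
  rw [Nat.card_Ioc, inter_comm] at hcard
  rw [starredInv, starredInv, wordInv_insertLetter ha hw, hsum]
  omega

lemma starredInv_insertLetter_insert_map (ha : a ≤ n) (hw : ∀ i, w i ≤ n)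
    (hT : T ⊆ (wordAsc n w).erase a) :
    starredInv (n + 1) (insertLetter (n + 1) a w) (insert a (T.map (natSuccAbove a))) =
      starredInv n w T + #(Ioc a n \ T) := by
  rw [← starredInv_insertLetter_map ha hw hT, starredInv, starredInv,
    sum_insert (by simp only [mem_map, natSuccAbove_apply]; grind),
    wordInvEnd_insertLetter_self hw, zero_add]

end Insertion

section StarSum

variable {R : Type*} [CommRing R] (q : R)

def starSum (n : ℕ) (w : ℕ → ℕ) (k : ℕ) : R :=
  ∑ T ∈ (wordAsc n w).powersetCard k, q ^ starredInv n w T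

/- The star sets of `w` avoiding `a`, weighted as they are after `n + 1` is inserted after
position `a` (see `starredInv_insertLetter_map`). -/
def starSumAvoiding (n : ℕ) (w : ℕ → ℕ) (a k : ℕ) : R :=
  ∑ T ∈ ((wordAsc n w).erase a).powersetCard k, q ^ (starredInv n w T + #(Ioc a n \ T))

variable {n a : ℕ} {w : ℕ → ℕ}

lemma sum_powersetCard_wordAsc_insertLetter_erase (ha : a ≤ n) (hw : ∀ i, w i ≤ n) (k : ℕ) :
    ∑ T ∈ ((wordAsc (n + 1) (insertLetter (n + 1) a w)).erase a).powersetCard k,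
      q ^ starredInv (n + 1) (insertLetter (n + 1) a w) T = starSumAvoiding q n w a k := by
  rw [wordAsc_insertLetter_erase ha hw, powersetCard_map, sum_map]
  exact sum_congr rfl fun T hT =>
    by rw [RelEmbedding.coe_toEmbedding, mapEmbedding_apply,
      starredInv_insertLetter_map ha hw (mem_powersetCard.1 hT).1]

lemma sum_powersetCard_wordAsc_insertLetter_erase_insert (ha : a ≤ n) (hw : ∀ i, w i ≤ n)
    (k : ℕ) :
    ∑ T ∈ ((wordAsc (n + 1) (insertLetter (n + 1) a w)).erase a).powersetCard k,
      q ^ starredInv (n + 1) (insertLetter (n + 1) a w) (insert a T) =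
        starSumAvoiding q n w a k := by
  rw [wordAsc_insertLetter_erase ha hw, powersetCard_map, sum_map]
  exact sum_congr rfl fun T hT =>
    by rw [RelEmbedding.coe_toEmbedding, mapEmbedding_apply,
      starredInv_insertLetter_insert_map ha hw (mem_powersetCard.1 hT).1]

lemma starSum_insertLetter_zero (ha : a ≤ n) (hw : ∀ i, w i ≤ n) :
    starSum q (n + 1) (insertLetter (n + 1) a w) 0 = starSumAvoiding q n w a 0 := by
  rw [starSum, powersetCard_zero, ← powersetCard_zero (Finset.erase _ a),
    sum_powersetCard_wordAsc_insertLetter_erase q ha hw]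

lemma starSum_insertLetter_succ (ha : a ≤ n) (hw : ∀ i, w i ≤ n) (k : ℕ) :
    starSum q (n + 1) (insertLetter (n + 1) a w) (k + 1) =
      starSumAvoiding q n w a (k + 1) + if 1 ≤ a then starSumAvoiding q n w a k else 0 := by
  rw [starSum, sum_powersetCard_succ _ a, sum_powersetCard_wordAsc_insertLetter_erase q ha hw,
    sum_powersetCard_wordAsc_insertLetter_erase_insert q ha hw]
  simp only [mem_wordAsc_insertLetter_self ha hw]

lemma sum_starSumAvoiding {b : ℕ} (hb : b ≤ 1) (k : ℕ) :
    ∑ a ∈ Icc b n, starSumAvoiding q n w a k = qnum q (n + 1 - b - k) * starSum q n w k := by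
  simp only [starSumAvoiding, starSum, pow_add]
  rw [sum_sum_powersetCard_erase, mul_sum]
  refine sum_congr rfl fun T hT => ?_
  obtain ⟨hTw, rfl⟩ := mem_powersetCard.1 hT
  have hTb : T ⊆ Icc b n := fun i hi => by
    have := mem_Icc.1 (wordAsc_subset n w (hTw hi))
    exact mem_Icc.2 ⟨by omega, by omega⟩
  rw [← mul_sum, sum_pow_card_Ioc_sdiff, card_sdiff_of_subset hTb, Nat.card_Icc, mul_comm]

lemma sum_starSum_insertLetter_zero (hw : ∀ i, w i ≤ n) :
    ∑ a ∈ range (n + 1), starSum q (n + 1) (insertLetter (n + 1) a w) 0 =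
      qnum q (n + 1) * starSum q n w 0 := by
  rw [Nat.range_succ_eq_Icc_zero, sum_congr rfl fun a ha =>
    starSum_insertLetter_zero q (mem_Icc.1 ha).2 hw, sum_starSumAvoiding q zero_le_one]
  rfl

lemma sum_starSum_insertLetter_succ (hw : ∀ i, w i ≤ n) (k : ℕ) :
    ∑ a ∈ range (n + 1), starSum q (n + 1) (insertLetter (n + 1) a w) (k + 1) =
      qnum q (n - k) * (starSum q n w (k + 1) + starSum q n w k) := by
  have hpos : (Icc 0 n).filter (1 ≤ ·) = Icc 1 n := by ext; simp; omega
  rw [Nat.range_succ_eq_Icc_zero, sum_congr rfl fun a ha =>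
    starSum_insertLetter_succ q (mem_Icc.1 ha).2 hw k, sum_add_distrib, ← sum_filter, hpos,
    sum_starSumAvoiding q zero_le_one, sum_starSumAvoiding q le_rfl, mul_add]
  congr 3
  omega

end StarSum

section Permutations

open Equiv

lemma eq_insertLetter_of_apply {m a : ℕ} {w v : ℕ → ℕ} (hself : v (a + 1) = m)
    (hshift : ∀ j, v (natSuccAbove (a + 1) j) = w j) : v = insertLetter m a w := by
  funext i
  by_cases hi : i = a + 1
  · rw [hi, hself, insertLetter_self]
  · have : natSuccAbove (a + 1) (if i ≤ a then i else i - 1) = i := by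
      simp only [natSuccAbove_apply]; split_ifs <;> omega
    rw [← this, hshift, insertLetter_natSuccAbove]

lemma val_succAbove_eq_natSuccAbove {n : ℕ} (a : Fin (n + 1)) (j : Fin n) :
    (a.succAbove j : ℕ) = natSuccAbove a j := by
  rw [Fin.succAbove, natSuccAbove_apply]
  split_ifs <;> simp_all [Fin.lt_def]

lemma oneline_le {n : ℕ} (σ : Perm (Fin n)) (i : ℕ) : oneline σ i ≤ n := by
  unfold oneline
  split_ifs
  · exact (σ _).isLt
  · exact Nat.zero_le n

/-- In one-line notation, `σ` with the letter `n + 1` inserted after its first `a` letters: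
`a.cycleRange` sends `a` to `0` and `a.succAbove j` to `j.succ`, the middle factor is `σ` on
successors, and the inverse rotation sends `0` to `Fin.last n` and `j.succ` to `j.castSucc`. -/
def insertMax {n : ℕ} (σ : Perm (Fin n)) (a : Fin (n + 1)) : Perm (Fin (n + 1)) :=
  (finRotate (n + 1)).symm * Perm.decomposeFin.symm (0, σ) * a.cycleRange

variable {n : ℕ} (σ : Perm (Fin n)) (a : Fin (n + 1))

lemma insertMax_apply_self : insertMax σ a a = Fin.last n := by
  rw [insertMax, Perm.mul_apply, Perm.mul_apply, Fin.cycleRange_self,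
    Perm.decomposeFin_symm_apply_zero, symm_apply_eq, finRotate_last]

lemma insertMax_apply_succAbove (j : Fin n) :
    insertMax σ a (a.succAbove j) = (σ j).castSucc := by
  rw [insertMax, Perm.mul_apply, Perm.mul_apply, Fin.cycleRange_succAbove,
    Perm.decomposeFin_symm_apply_succ, swap_self, refl_apply, symm_apply_eq, finRotate_apply,
    Fin.coeSucc_eq_succ]

lemma oneline_insertMax : oneline (insertMax σ a) = insertLetter (n + 1) a (oneline σ) := by
  refine eq_insertLetter_of_apply ?_ fun j => ?_
  · simp [oneline, insertMax_apply_self, Nat.le_of_lt_succ a.isLt]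
  by_cases hj : 1 ≤ j ∧ j ≤ n
  · have hrange : 1 ≤ natSuccAbove (a + 1) j ∧ natSuccAbove (a + 1) j ≤ n + 1 := by
      simp only [natSuccAbove_apply]; split_ifs <;> omega
    have hpos : natSuccAbove (a + 1) j - 1 = a.succAbove ⟨j - 1, by omega⟩ := by
      rw [val_succAbove_eq_natSuccAbove]; simp only [natSuccAbove_apply]; split_ifs <;> omega
    rw [oneline, dif_pos hrange, oneline, dif_pos hj,
      show (⟨_, _⟩ : Fin (n + 1)) = a.succAbove ⟨j - 1, _⟩ from Fin.ext hpos,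
      insertMax_apply_succAbove, Fin.val_castSucc]
  · have hrange : ¬(1 ≤ natSuccAbove (a + 1) j ∧ natSuccAbove (a + 1) j ≤ n + 1) := by
      simp only [natSuccAbove_apply]; split_ifs <;> omega
    rw [oneline, dif_neg hrange, oneline, dif_neg hj]

lemma insertMax_bijective :
    Function.Bijective fun p : Fin (n + 1) × Perm (Fin n) => insertMax p.2 p.1 := by
  refine (Fintype.bijective_iff_injective_and_card _).2 ⟨?_, ?_⟩
  · rintro ⟨a, σ⟩ ⟨a', σ'⟩ h
    simp only at h
    obtain rfl : a = a' := (insertMax σ a).injective <| by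
      rw [insertMax_apply_self, h, insertMax_apply_self]
    refine Prod.ext rfl (Perm.ext fun j => Fin.castSucc_injective n ?_)
    rw [← insertMax_apply_succAbove, h, insertMax_apply_succAbove]
  · simp [Fintype.card_perm, Nat.factorial_succ]

lemma sum_perm_succ {M : Type*} [AddCommMonoid M] (G : (ℕ → ℕ) → M) :
    ∑ τ : Perm (Fin (n + 1)), G (oneline τ) =
      ∑ σ : Perm (Fin n), ∑ a ∈ range (n + 1), G (insertLetter (n + 1) a (oneline σ)) := by
  rw [← Fintype.sum_bijective _ insertMax_bijective (fun p => G (oneline (insertMax p.2 p.1)))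
    _ fun _ => rfl, Fintype.sum_prod_type_right]
  simp_rw [oneline_insertMax]
  exact sum_congr rfl fun σ _ =>
    Fin.sum_univ_eq_sum_range (fun a => G (insertLetter (n + 1) a (oneline σ))) _

end Permutations

section Counting

variable {R : Type*} [CommRing R] (q : R)

def starredPermSum (n k : ℕ) : R := ∑ σ : Equiv.Perm (Fin n), starSum q n (oneline σ) k

lemma starredPermSum_zero_zero : starredPermSum q 0 0 = 1 := by
  simp [starredPermSum, starSum, starredInv, wordInv]

lemma starredPermSum_succ_zero (n : ℕ) :
    starredPermSum q (n + 1) 0 = qnum q (n + 1) * starredPermSum q n 0 := by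
  rw [starredPermSum, sum_perm_succ (starSum q (n + 1) · 0), starredPermSum, mul_sum]
  exact sum_congr rfl fun σ _ => sum_starSum_insertLetter_zero q (oneline_le σ)

lemma starredPermSum_succ_succ (n k : ℕ) :
    starredPermSum q (n + 1) (k + 1) =
      qnum q (n - k) * (starredPermSum q n (k + 1) + starredPermSum q n k) := by
  rw [starredPermSum, sum_perm_succ (starSum q (n + 1) · (k + 1)), starredPermSum,
    starredPermSum, ← sum_add_distrib, mul_sum]
  exact sum_congr rfl fun σ _ => sum_starSum_insertLetter_succ q (oneline_le σ) k

theorem starredPermSum_eq : ∀ {n k : ℕ}, k ≤ n →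
    starredPermSum q n k = qfact q (n - k) * qStirling q n (n - k)
  | 0, 0, _ => by simp [starredPermSum_zero_zero, qfact, qStirling]
  | n + 1, 0, _ => by
    rw [starredPermSum_succ_zero, starredPermSum_eq (Nat.zero_le n), Nat.sub_zero, Nat.sub_zero,
      qfact_succ, qStirling, qStirling_eq_zero_of_lt q n.lt_succ_self]
    ring
  | n + 1, k + 1, hk => by
    rw [starredPermSum_succ_succ]
    rcases Nat.lt_or_ge k n with hkn | hkn
    · obtain ⟨m, hm⟩ : ∃ m, n - k = m + 1 := ⟨n - k - 1, by omega⟩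
      rw [starredPermSum_eq (by omega : k + 1 ≤ n), starredPermSum_eq hkn.le,
        show n - (k + 1) = m by omega, show n + 1 - (k + 1) = m + 1 by omega, hm, qStirling,
        qfact_succ]
      ring
    · rw [show n - k = 0 by omega, show n + 1 - (k + 1) = 0 by omega, qnum, sum_range_zero,
        zero_mul, qStirling, mul_zero]

end Counting

end StarredAscents

theorem statement14_general {R : Type*} [CommRing R] (q : R) (n k : ℕ) (hk : k ≤ n - 1) :
    ∑ σ : Equiv.Perm (Fin n), ∑ T ∈ starSets (AscSet σ) k,
        q ^ (invNum σ - ∑ i ∈ T, invEnd σ (i + 1)) =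
      qfact q (n - k) * qStirling q n (n - k) := by
  simp only [starSets, ← powersetCard_eq_filter]
  exact StarredAscents.starredPermSum_eq q (by omega)

/-- For all n ≥ 1, 0 ≤ k ≤ n−1 and q in a commutative ring,
Σ_{(σ,T)∈𝔖^<_{n,k}} q^{inv(σ) − Σ_{i∈T} inv^{□,i+1}(σ)} = [n−k]_q! · S_{n,n−k}(q). -/
theorem statement14 {R : Type*} [CommRing R] (q : R) (n k : ℕ) (hn : 1 ≤ n) (hk : k ≤ n - 1) :
    ∑ σ : Equiv.Perm (Fin n), ∑ T ∈ starSets (AscSet σ) k,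
        q ^ (invNum σ - ∑ i ∈ T, invEnd σ (i + 1)) =
      qfact q (n - k) * qStirling q n (n - k) :=
  statement14_general q n k hk
end
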